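/- In genus 3, the three derivations 𝓛₁, 𝓛₃, 𝓛₅ of ℂ[x₂,x₃,x₄,y₄,y₅,y₆,z₆,z₇,z₈] pairwise commute: [𝓛₁,𝓛₃] = [𝓛₁,𝓛₅] = [𝓛₃,𝓛₅] = 0. -/
import Mathlib


open MvPolynomial

noncomputable abbrev x2 : MvPolynomial (Fin 9) ℂ := X 0
noncomputable abbrev x3 : MvPolynomial (Fin 9) ℂ := X 1
noncomputable abbrev x4 : MvPolynomial (Fin 9) ℂ := X 2
noncomputable abbrev y4 : MvPolynomial (Fin 9) ℂ := X 3
noncomputable abbrev y5 : MvPolynomial (Fin 9) ℂ := X 4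
noncomputable abbrev y6 : MvPolynomial (Fin 9) ℂ := X 5
noncomputable abbrev z6 : MvPolynomial (Fin 9) ℂ := X 6
noncomputable abbrev z7 : MvPolynomial (Fin 9) ℂ := X 7
noncomputable abbrev z8 : MvPolynomial (Fin 9) ℂ := X 8

/-- The genus 3 derivation
`𝓛₁ = x₃∂x₂ + x₄∂x₃ + 4(3x₂x₃+y₅)∂x₄ + y₅∂y₄ + y₆∂y₅ + 4(x₃y₄+2x₂y₅+z₇)∂y₆
      + z₇∂z₆ + z₈∂z₇ + 4(x₃z₆+2x₂z₇)∂z₈`. -/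
noncomputable def L1 : Derivation ℂ (MvPolynomial (Fin 9) ℂ) (MvPolynomial (Fin 9) ℂ) :=
  mkDerivation ℂ ![x3, x4, 4 * (3 * x2 * x3 + y5),
    y5, y6, 4 * (x3 * y4 + 2 * x2 * y5 + z7),
    z7, z8, 4 * (x3 * z6 + 2 * x2 * z7)]

/-- The genus 3 derivation `𝓛₃`, determined by `𝓛₃(x₂)=y₅`, `𝓛₃(y₄)=x₃y₄-x₂y₅+z₇`,
`𝓛₃(z₆)=x₃z₆-x₂z₇`, its values on the remaining generators being obtained by
repeated application of `𝓛₁` as in the paper's equation (Ls). -/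
noncomputable def L3 : Derivation ℂ (MvPolynomial (Fin 9) ℂ) (MvPolynomial (Fin 9) ℂ) :=
  mkDerivation ℂ ![y5, y6, 4 * (x3 * y4 + 2 * x2 * y5 + z7),
    x3 * y4 - x2 * y5 + z7,
    x4 * y4 - x2 * y6 + z8,
    8 * x2 * x3 * y4 - 8 * x2 ^ 2 * y5 + x4 * y5 - x3 * y6 + 4 * y4 * y5 +
      4 * x3 * z6 + 4 * x2 * z7,
    x3 * z6 - x2 * z7,
    x4 * z6 - x2 * z8,
    8 * x2 * x3 * z6 - 8 * x2 ^ 2 * z7 + 4 * y5 * z6 + x4 * z7 - x3 * z8]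

/-- The genus 3 derivation `𝓛₅`, determined by `𝓛₅(x₂)=z₇`, `𝓛₅(y₄)=x₃z₆-x₂z₇`,
`𝓛₅(z₆)=y₅z₆-y₄z₇`, its values on the remaining generators being obtained by
repeated application of `𝓛₁` as in the paper's equation (Ls). -/
noncomputable def L5 : Derivation ℂ (MvPolynomial (Fin 9) ℂ) (MvPolynomial (Fin 9) ℂ) :=
  mkDerivation ℂ ![z7, z8, 4 * (x3 * z6 + 2 * x2 * z7),
    x3 * z6 - x2 * z7,
    x4 * z6 - x2 * z8,
    8 * x2 * x3 * z6 - 8 * x2 ^ 2 * z7 + 4 * y5 * z6 + x4 * z7 - x3 * z8,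
    y5 * z6 - y4 * z7,
    y6 * z6 - y4 * z8,
    8 * x2 * y5 * z6 - 8 * x2 * y4 * z7 + 4 * z6 * z7 + y6 * z7 - y5 * z8]

private lemma D_ofNat (D : Derivation ℂ (MvPolynomial (Fin 9) ℂ) (MvPolynomial (Fin 9) ℂ))
    (n : ℕ) [n.AtLeastTwo] :
    D (OfNat.ofNat n : MvPolynomial (Fin 9) ℂ) = 0 := by
  have h : (OfNat.ofNat n : MvPolynomial (Fin 9) ℂ) = ((OfNat.ofNat n : ℕ) : MvPolynomial (Fin 9) ℂ) :=
    (Nat.cast_ofNat).symm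
  rw [h]; exact D.map_natCast _

private lemma fm0 (h : 0 < 9) : (⟨0, h⟩ : Fin 9) = 0 := rfl
private lemma fm1 (h : 1 < 9) : (⟨1, h⟩ : Fin 9) = 1 := rfl
private lemma fm2 (h : 2 < 9) : (⟨2, h⟩ : Fin 9) = 2 := rfl
private lemma fm3 (h : 3 < 9) : (⟨3, h⟩ : Fin 9) = 3 := rfl
private lemma fm4 (h : 4 < 9) : (⟨4, h⟩ : Fin 9) = 4 := rfl
private lemma fm5 (h : 5 < 9) : (⟨5, h⟩ : Fin 9) = 5 := rfl
private lemma fm6 (h : 6 < 9) : (⟨6, h⟩ : Fin 9) = 6 := rfl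
private lemma fm7 (h : 7 < 9) : (⟨7, h⟩ : Fin 9) = 7 := rfl
private lemma fm8 (h : 8 < 9) : (⟨8, h⟩ : Fin 9) = 8 := rfl

private lemma L1X0 : L1 (X 0) = x3 := by
  simp only [L1]; rw [mkDerivation_X]; rfl
private lemma L1X1 : L1 (X 1) = x4 := by
  simp only [L1]; rw [mkDerivation_X]; rfl
private lemma L1X2 : L1 (X 2) = 4 * (3 * x2 * x3 + y5) := by
  simp only [L1]; rw [mkDerivation_X]; rfl
private lemma L1X3 : L1 (X 3) = y5 := by
  simp only [L1]; rw [mkDerivation_X]; rfl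
private lemma L1X4 : L1 (X 4) = y6 := by
  simp only [L1]; rw [mkDerivation_X]; rfl
private lemma L1X5 : L1 (X 5) = 4 * (x3 * y4 + 2 * x2 * y5 + z7) := by
  simp only [L1]; rw [mkDerivation_X]; rfl
private lemma L1X6 : L1 (X 6) = z7 := by
  simp only [L1]; rw [mkDerivation_X]; rfl
private lemma L1X7 : L1 (X 7) = z8 := by
  simp only [L1]; rw [mkDerivation_X]; rfl
private lemma L1X8 : L1 (X 8) = 4 * (x3 * z6 + 2 * x2 * z7) := by
  simp only [L1]; rw [mkDerivation_X]; rfl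
private lemma L3X0 : L3 (X 0) = y5 := by
  simp only [L3]; rw [mkDerivation_X]; rfl
private lemma L3X1 : L3 (X 1) = y6 := by
  simp only [L3]; rw [mkDerivation_X]; rfl
private lemma L3X2 : L3 (X 2) = 4 * (x3 * y4 + 2 * x2 * y5 + z7) := by
  simp only [L3]; rw [mkDerivation_X]; rfl
private lemma L3X3 : L3 (X 3) = x3 * y4 - x2 * y5 + z7 := by
  simp only [L3]; rw [mkDerivation_X]; rfl
private lemma L3X4 : L3 (X 4) = x4 * y4 - x2 * y6 + z8 := by
  simp only [L3]; rw [mkDerivation_X]; rfl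
private lemma L3X5 : L3 (X 5) = 8 * x2 * x3 * y4 - 8 * x2 ^ 2 * y5 + x4 * y5 - x3 * y6 + 4 * y4 * y5 + 4 * x3 * z6 + 4 * x2 * z7 := by
  simp only [L3]; rw [mkDerivation_X]; rfl
private lemma L3X6 : L3 (X 6) = x3 * z6 - x2 * z7 := by
  simp only [L3]; rw [mkDerivation_X]; rfl
private lemma L3X7 : L3 (X 7) = x4 * z6 - x2 * z8 := by
  simp only [L3]; rw [mkDerivation_X]; rfl
private lemma L3X8 : L3 (X 8) = 8 * x2 * x3 * z6 - 8 * x2 ^ 2 * z7 + 4 * y5 * z6 + x4 * z7 - x3 * z8 := by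
  simp only [L3]; rw [mkDerivation_X]; rfl
private lemma L5X0 : L5 (X 0) = z7 := by
  simp only [L5]; rw [mkDerivation_X]; rfl
private lemma L5X1 : L5 (X 1) = z8 := by
  simp only [L5]; rw [mkDerivation_X]; rfl
private lemma L5X2 : L5 (X 2) = 4 * (x3 * z6 + 2 * x2 * z7) := by
  simp only [L5]; rw [mkDerivation_X]; rfl
private lemma L5X3 : L5 (X 3) = x3 * z6 - x2 * z7 := by
  simp only [L5]; rw [mkDerivation_X]; rfl
private lemma L5X4 : L5 (X 4) = x4 * z6 - x2 * z8 := by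
  simp only [L5]; rw [mkDerivation_X]; rfl
private lemma L5X5 : L5 (X 5) = 8 * x2 * x3 * z6 - 8 * x2 ^ 2 * z7 + 4 * y5 * z6 + x4 * z7 - x3 * z8 := by
  simp only [L5]; rw [mkDerivation_X]; rfl
private lemma L5X6 : L5 (X 6) = y5 * z6 - y4 * z7 := by
  simp only [L5]; rw [mkDerivation_X]; rfl
private lemma L5X7 : L5 (X 7) = y6 * z6 - y4 * z8 := by
  simp only [L5]; rw [mkDerivation_X]; rfl
private lemma L5X8 : L5 (X 8) = 8 * x2 * y5 * z6 - 8 * x2 * y4 * z7 + 4 * z6 * z7 + y6 * z7 - y5 * z8 := by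
  simp only [L5]; rw [mkDerivation_X]; rfl

private lemma L1c2 : L1 (2 : MvPolynomial (Fin 9) ℂ) = 0 := D_ofNat _ _
private lemma L1c3 : L1 (3 : MvPolynomial (Fin 9) ℂ) = 0 := D_ofNat _ _
private lemma L1c4 : L1 (4 : MvPolynomial (Fin 9) ℂ) = 0 := D_ofNat _ _
private lemma L1c8 : L1 (8 : MvPolynomial (Fin 9) ℂ) = 0 := D_ofNat _ _
private lemma L3c2 : L3 (2 : MvPolynomial (Fin 9) ℂ) = 0 := D_ofNat _ _
private lemma L3c3 : L3 (3 : MvPolynomial (Fin 9) ℂ) = 0 := D_ofNat _ _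
private lemma L3c4 : L3 (4 : MvPolynomial (Fin 9) ℂ) = 0 := D_ofNat _ _
private lemma L3c8 : L3 (8 : MvPolynomial (Fin 9) ℂ) = 0 := D_ofNat _ _
private lemma L5c2 : L5 (2 : MvPolynomial (Fin 9) ℂ) = 0 := D_ofNat _ _
private lemma L5c3 : L5 (3 : MvPolynomial (Fin 9) ℂ) = 0 := D_ofNat _ _
private lemma L5c4 : L5 (4 : MvPolynomial (Fin 9) ℂ) = 0 := D_ofNat _ _
private lemma L5c8 : L5 (8 : MvPolynomial (Fin 9) ℂ) = 0 := D_ofNat _ _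


set_option maxHeartbeats 2000000 in
/-- The derivations `𝓛₁, 𝓛₃, 𝓛₅` pairwise commute. -/
theorem L1_L3_L5_commute : ⁅L1, L3⁆ = 0 ∧ ⁅L1, L5⁆ = 0 ∧ ⁅L3, L5⁆ = 0 := by
  refine ⟨?_, ?_, ?_⟩ <;>
  · apply derivation_ext
    intro i
    fin_cases i <;>
    · simp only [Derivation.commutator_apply, fm0, fm1, fm2, fm3, fm4, fm5, fm6, fm7, fm8,
        map_add, map_sub, Derivation.leibniz, Derivation.leibniz_pow, D_ofNat,
        smul_eq_mul, nsmul_eq_mul, L1c2, L1c3, L1c4, L1c8, L3c2, L3c3, L3c4, L3c8, L5c2, L5c3, L5c4, L5c8, L1X0, L1X1, L1X2, L1X3, L1X4, L1X5, L1X6, L1X7, L1X8, L3X0, L3X1, L3X2, L3X3, L3X4, L3X5, L3X6, L3X7, L3X8, L5X0, L5X1, L5X2, L5X3, L5X4, L5X5, L5X6, L5X7, L5X8,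
        Derivation.map_zero, mul_zero, zero_mul, add_zero, zero_add,
        Derivation.zero_apply]
      ring
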